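/- arXiv:2203.15351 — 3 statements merged into one kernel-verified Lean document; each statement's English description precedes it below -/
import Mathlib

section
/- Hoffman–Wielandt inequality: if A and B are real symmetric n×n matrices with eigenvalues λ₁(A) ≥ ⋯ ≥ λ_n(A) and λ₁(B) ≥ ⋯ ≥ λ_n(B), then Σ_{i=1}^n (λ_i(A) − λ_i(B))² ≤ ‖A − B‖_F², where ‖·‖_F is the Frobenius norm. -/
open Finset

lemma hw_sum4_comm {n : ℕ} (F : Fin n → Fin n → Fin n → Fin n → ℝ) :
    ∑ i, ∑ j, ∑ k, ∑ l, F i j k l = ∑ k, ∑ l, ∑ i, ∑ j, F i j k l := by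
  calc ∑ i, ∑ j, ∑ k, ∑ l, F i j k l
      = ∑ i, ∑ k, ∑ j, ∑ l, F i j k l := Finset.sum_congr rfl fun i _ => Finset.sum_comm
    _ = ∑ k, ∑ i, ∑ j, ∑ l, F i j k l := Finset.sum_comm
    _ = ∑ k, ∑ i, ∑ l, ∑ j, F i j k l :=
        Finset.sum_congr rfl fun k _ => Finset.sum_congr rfl fun i _ => Finset.sum_comm
    _ = ∑ k, ∑ l, ∑ i, ∑ j, F i j k l := Finset.sum_congr rfl fun k _ => Finset.sum_comm

lemma hw_abel_expand {n : ℕ} (w : Fin n → Fin n → ℝ) (a b : Fin n → ℝ) :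
    ∑ i, ∑ j, w i j * (∑ k ∈ Ici i, a k) * (∑ l ∈ Ici j, b l)
      = ∑ k, ∑ l, a k * b l * (∑ i ∈ Iic k, ∑ j ∈ Iic l, w i j) := by
  have h : ∀ (i : Fin n) (c : Fin n → ℝ), ∑ k ∈ Ici i, c k = ∑ k, if i ≤ k then c k else 0 := by
    intro i c
    rw [show Ici i = univ.filter (fun k => i ≤ k) by ext; simp, Finset.sum_filter]
  have h2 : ∀ (k : Fin n) (c : Fin n → ℝ), ∑ i ∈ Iic k, c i = ∑ i, if i ≤ k then c i else 0 := by
    intro k c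
    rw [show Iic k = univ.filter (fun i => i ≤ k) by ext; simp, Finset.sum_filter]
  have expand : ∀ (x : ℝ) (p q : Fin n → ℝ),
      x * (∑ k, p k) * (∑ l, q l) = ∑ k, ∑ l, x * p k * q l := by
    intro x p q
    rw [mul_assoc, Finset.sum_mul_sum, Finset.mul_sum]
    exact Finset.sum_congr rfl fun k _ => by
      rw [Finset.mul_sum]; exact Finset.sum_congr rfl fun l _ => by ring
  simp only [h, h2]
  calc (∑ i, ∑ j, w i j * (∑ k, if i ≤ k then a k else 0) * (∑ l, if j ≤ l then b l else 0))
      = ∑ i, ∑ j, ∑ k, ∑ l, w i j * (if i ≤ k then a k else 0) * (if j ≤ l then b l else 0) :=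
        Finset.sum_congr rfl fun i _ => Finset.sum_congr rfl fun j _ => expand _ _ _
    _ = ∑ k, ∑ l, ∑ i, ∑ j, w i j * (if i ≤ k then a k else 0) * (if j ≤ l then b l else 0) :=
        hw_sum4_comm _
    _ = ∑ k, ∑ l, a k * b l * ∑ i, if i ≤ k then ∑ j, if j ≤ l then w i j else 0 else 0 := by
        refine Finset.sum_congr rfl fun k _ => Finset.sum_congr rfl fun l _ => ?_
        rw [Finset.mul_sum]
        refine Finset.sum_congr rfl fun i _ => ?_
        rw [mul_ite, mul_zero, Finset.mul_sum]
        by_cases hik : i ≤ k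
        · simp only [hik, if_true]
          refine Finset.sum_congr rfl fun j _ => ?_
          by_cases hjl : j ≤ l <;> simp [hjl] <;> ring
        · simp [hik]

lemma hw_tele {n : ℕ} (f : Fin n → ℝ) (i : Fin n) :
    ∑ k ∈ Ici i, (f k - if h : (k : ℕ) + 1 < n then f ⟨(k : ℕ) + 1, h⟩ else 0) = f i := by
  cases n with
  | zero => exact i.elim0
  | succ m =>
    induction i using Fin.reverseInduction with
    | last =>
      have hIci : Ici (Fin.last m) = {Fin.last m} := by
        ext x
        simp only [mem_Ici, Finset.mem_singleton]
        constructor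
        · intro h; exact le_antisymm (Fin.le_last x) h
        · intro h; exact h.ge
      rw [hIci, Finset.sum_singleton]
      have : ¬ ((Fin.last m : ℕ) + 1 < m + 1) := by simp
      rw [dif_neg this, sub_zero]
    | cast j ih =>
      have hIoi : Ioi (Fin.castSucc j) = Ici j.succ := by
        ext x
        simp only [Finset.mem_Ioi, Finset.mem_Ici, Fin.lt_def, Fin.le_def, Fin.coe_castSucc,
          Fin.val_succ]
        omega
      rw [← Finset.Ioi_insert, Finset.sum_insert (by simp), hIoi, ih]
      have h1 : ((Fin.castSucc j : ℕ) + 1 < m + 1) := by simp [j.isLt]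
      rw [dif_pos h1]
      have : (⟨(Fin.castSucc j : ℕ) + 1, h1⟩ : Fin (m+1)) = j.succ := rfl
      rw [this]; ring

lemma hw_ds_rearrange {n : ℕ} (S : Fin n → Fin n → ℝ) (hS0 : ∀ i j, 0 ≤ S i j)
    (hrow : ∀ i, ∑ j, S i j = 1) (hcol : ∀ j, ∑ i, S i j = 1)
    (f g : Fin n → ℝ) (hf : Antitone f) (hg : Antitone g) :
    ∑ i, ∑ j, S i j * f i * g j ≤ ∑ i, f i * g i := by
  set a : Fin n → ℝ := fun k => f k - if h : (k : ℕ) + 1 < n then f ⟨(k : ℕ) + 1, h⟩ else 0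
    with ha
  set b : Fin n → ℝ := fun l => g l - if h : (l : ℕ) + 1 < n then g ⟨(l : ℕ) + 1, h⟩ else 0
    with hb
  have hfa : ∀ i, f i = ∑ k ∈ Ici i, a k := fun i => (hw_tele f i).symm
  have hgb : ∀ j, g j = ∑ l ∈ Ici j, b l := fun j => (hw_tele g j).symm
  set d : Fin n → Fin n → ℝ := fun i j => if i = j then 1 else 0 with hd
  have L : ∑ i, ∑ j, S i j * f i * g j
      = ∑ k, ∑ l, a k * b l * (∑ i ∈ Iic k, ∑ j ∈ Iic l, S i j) := by
    rw [← hw_abel_expand S a b]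
    refine Finset.sum_congr rfl fun i _ => Finset.sum_congr rfl fun j _ => ?_
    rw [← hfa, ← hgb]
  have R : ∑ i, f i * g i
      = ∑ k, ∑ l, a k * b l * (∑ i ∈ Iic k, ∑ j ∈ Iic l, d i j) := by
    rw [← hw_abel_expand d a b]
    have : ∀ i : Fin n, ∑ j, d i j * f i * g j = f i * g i := by
      intro i
      rw [Finset.sum_eq_single i]
      · simp [hd]
      · intro j _ hj; simp [hd, Ne.symm hj]
      · simp
    rw [show (∑ i, ∑ j, d i j * (∑ k ∈ Ici i, a k) * (∑ l ∈ Ici j, b l))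
        = ∑ i, ∑ j, d i j * f i * g j from
        Finset.sum_congr rfl fun i _ => Finset.sum_congr rfl fun j _ => by rw [← hfa, ← hgb]]
    exact (Finset.sum_congr rfl fun i _ => this i).symm
  rw [L, R]
  refine Finset.sum_le_sum fun k _ => Finset.sum_le_sum fun l _ => ?_
  have hTd : ∑ i ∈ Iic k, ∑ j ∈ Iic l, d i j = ((Iic k ∩ Iic l).card : ℝ) := by
    simp only [hd, Finset.sum_ite_eq]
    rw [Finset.sum_boole, Finset.filter_mem_eq_inter]
  have hT1 : ∑ i ∈ Iic k, ∑ j ∈ Iic l, S i j ≤ ((k : ℕ) + 1 : ℝ) := by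
    calc ∑ i ∈ Iic k, ∑ j ∈ Iic l, S i j ≤ ∑ i ∈ Iic k, (1 : ℝ) := by
          refine Finset.sum_le_sum fun i _ => ?_
          rw [← hrow i]
          exact Finset.sum_le_sum_of_subset_of_nonneg (Finset.subset_univ _)
            (fun j _ _ => hS0 i j)
      _ = ((k : ℕ) + 1 : ℝ) := by rw [Finset.sum_const, Fin.card_Iic]; simp
  have hT2 : ∑ i ∈ Iic k, ∑ j ∈ Iic l, S i j ≤ ((l : ℕ) + 1 : ℝ) := by
    rw [Finset.sum_comm]
    calc ∑ j ∈ Iic l, ∑ i ∈ Iic k, S i j ≤ ∑ j ∈ Iic l, (1 : ℝ) := by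
          refine Finset.sum_le_sum fun j _ => ?_
          rw [← hcol j]
          exact Finset.sum_le_sum_of_subset_of_nonneg (Finset.subset_univ _)
            (fun i _ _ => hS0 i j)
      _ = ((l : ℕ) + 1 : ℝ) := by rw [Finset.sum_const, Fin.card_Iic]; simp
  by_cases hk : (k : ℕ) + 1 < n
  · by_cases hl : (l : ℕ) + 1 < n
    · have hak : 0 ≤ a k := by
        rw [ha]; dsimp only; rw [dif_pos hk, sub_nonneg]
        exact hf (by simp [Fin.le_def])
      have hbl : 0 ≤ b l := by
        rw [hb]; dsimp only; rw [dif_pos hl, sub_nonneg]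
        exact hg (by simp [Fin.le_def])
      rw [hTd]
      rcases le_total k l with hkl | hkl
      · have : Iic k ∩ Iic l = Iic k := by
          rw [Finset.inter_eq_left]; exact Finset.Iic_subset_Iic.2 hkl
        rw [this, Fin.card_Iic]
        refine mul_le_mul_of_nonneg_left ?_ (mul_nonneg hak hbl)
        simpa using hT1
      · have : Iic k ∩ Iic l = Iic l := by
          rw [Finset.inter_eq_right]; exact Finset.Iic_subset_Iic.2 hkl
        rw [this, Fin.card_Iic]
        refine mul_le_mul_of_nonneg_left ?_ (mul_nonneg hak hbl)
        simpa using hT2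
    · have hluniv : Iic l = Finset.univ := by
        ext x
        simp only [Finset.mem_Iic, Finset.mem_univ, iff_true, Fin.le_def]
        omega
      have hTS : ∑ i ∈ Iic k, ∑ j ∈ Iic l, S i j = ((k : ℕ) + 1 : ℝ) := by
        rw [hluniv]
        calc ∑ i ∈ Iic k, ∑ j, S i j = ∑ i ∈ Iic k, (1:ℝ) :=
              Finset.sum_congr rfl fun i _ => hrow i
          _ = _ := by rw [Finset.sum_const, Fin.card_Iic]; simp
      have hcap : Iic k ∩ Iic l = Iic k := by rw [hluniv, Finset.inter_univ]
      rw [hTd, hTS, hcap, Fin.card_Iic]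
      simp
  · have hkuniv : Iic k = Finset.univ := by
      ext x
      simp only [Finset.mem_Iic, Finset.mem_univ, iff_true, Fin.le_def]
      omega
    have hTS : ∑ i ∈ Iic k, ∑ j ∈ Iic l, S i j = ((l : ℕ) + 1 : ℝ) := by
      rw [hkuniv, Finset.sum_comm]
      calc ∑ j ∈ Iic l, ∑ i, S i j = ∑ j ∈ Iic l, (1:ℝ) :=
            Finset.sum_congr rfl fun j _ => hcol j
        _ = _ := by rw [Finset.sum_const, Fin.card_Iic]; simp
    have hcap : Iic k ∩ Iic l = Iic l := by rw [hkuniv, Finset.univ_inter]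
    rw [hTd, hTS, hcap, Fin.card_Iic]
    simp

lemma hw_trace_formula {n : ℕ} (U V : Matrix (Fin n) (Fin n) ℝ) (lam mu : Fin n → ℝ) :
    Matrix.trace (U * Matrix.diagonal lam * star U * (V * Matrix.diagonal mu * star V))
      = ∑ i, ∑ j, lam i * mu j * ((star U * V) i j) ^ 2 := by
  set W := star U * V with hW
  have hstarW : star W = star V * U := by rw [hW, star_mul, star_star]
  have h1 : U * Matrix.diagonal lam * star U * (V * Matrix.diagonal mu * star V)
      = U * (Matrix.diagonal lam * star U * (V * Matrix.diagonal mu * star V)) := by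
    simp only [Matrix.mul_assoc]
  rw [h1, Matrix.trace_mul_comm]
  have h2 : Matrix.diagonal lam * star U * (V * Matrix.diagonal mu * star V) * U
      = Matrix.diagonal lam * (W * (Matrix.diagonal mu * star W)) := by
    rw [hW, hstarW]; simp only [Matrix.mul_assoc]
  rw [h2]
  rw [Matrix.trace]
  rw [show ∀ M : Matrix (Fin n) (Fin n) ℝ, ∑ i, (Matrix.diagonal lam * M).diag i
      = ∑ i, lam i * M.diag i from fun M => Finset.sum_congr rfl fun i _ => by
    simp [Matrix.diag, Matrix.mul_apply, Matrix.diagonal_apply]]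
  refine Finset.sum_congr rfl fun i _ => ?_
  have : (W * (Matrix.diagonal mu * star W)).diag i
      = ∑ j, W i j * (mu j * W i j) := by
    simp [Matrix.diag, Matrix.mul_apply, Matrix.diagonal_apply, Matrix.star_apply,
      Finset.mul_sum]
  rw [this, Finset.mul_sum]
  exact Finset.sum_congr rfl fun j _ => by ring

/-- Hoffman–Wielandt inequality: if `A` and `B` are real symmetric `n×n` matrices
with eigenvalues listed in decreasing order (with multiplicity) as `lamA` and
`lamB`, then `Σ_i (λ_i(A) − λ_i(B))² ≤ ‖A − B‖_F²`. -/
theorem hoffman_wielandt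
    (n : ℕ) (A B : Matrix (Fin n) (Fin n) ℝ)
    (hA : A.IsHermitian) (hB : B.IsHermitian)
    (lamA lamB : Fin n → ℝ)
    (hAdec : Antitone lamA) (hBdec : Antitone lamB)
    (hAeig : ∃ σ : Equiv.Perm (Fin n), lamA = hA.eigenvalues ∘ σ)
    (hBeig : ∃ σ : Equiv.Perm (Fin n), lamB = hB.eigenvalues ∘ σ) :
    ∑ i : Fin n, (lamA i - lamB i) ^ 2
      ≤ ∑ i : Fin n, ∑ j : Fin n, ((A - B) i j) ^ 2 := by
  obtain ⟨σ, hσ⟩ := hAeig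
  obtain ⟨τ, hτ⟩ := hBeig
  set U : Matrix (Fin n) (Fin n) ℝ := (hA.eigenvectorUnitary : Matrix (Fin n) (Fin n) ℝ)
    with hUdef
  set V : Matrix (Fin n) (Fin n) ℝ := (hB.eigenvectorUnitary : Matrix (Fin n) (Fin n) ℝ)
    with hVdef
  set lam := hA.eigenvalues with hlam
  set mu := hB.eigenvalues with hmu
  have hAs : A = U * Matrix.diagonal lam * star U := by
    have := hA.spectral_theorem
    simpa using this
  have hBs : B = V * Matrix.diagonal mu * star V := by
    have := hB.spectral_theorem
    simpa using this
  have hUU : star U * U = 1 := Matrix.mem_unitaryGroup_iff'.mp hA.eigenvectorUnitary.2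
  have hUU' : U * star U = 1 := Matrix.mem_unitaryGroup_iff.mp hA.eigenvectorUnitary.2
  have hVV : star V * V = 1 := Matrix.mem_unitaryGroup_iff'.mp hB.eigenvectorUnitary.2
  have hVV' : V * star V = 1 := Matrix.mem_unitaryGroup_iff.mp hB.eigenvectorUnitary.2
  set W : Matrix (Fin n) (Fin n) ℝ := star U * V with hWdef
  have hstarW : star W = star V * U := by rw [hWdef, star_mul, star_star]
  have hWW : W * star W = 1 := by
    have e : W * star W = star U * (V * star V) * U := by
      rw [hWdef, hstarW]; simp only [Matrix.mul_assoc]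
    rw [e, hVV', Matrix.mul_one, hUU]
  have hWW' : star W * W = 1 := by
    have e : star W * W = star V * (U * star U) * V := by
      rw [hWdef, hstarW]; simp only [Matrix.mul_assoc]
    rw [e, hUU', Matrix.mul_one, hVV]
  -- row and column sums of squares
  have hrowW : ∀ i, ∑ j, (W i j) ^ 2 = 1 := by
    intro i
    have h := congrFun (congrFun hWW i) i
    rw [Matrix.mul_apply] at h
    simp only [Matrix.star_apply, star_trivial, Matrix.one_apply_eq] at h
    rw [← h]
    exact Finset.sum_congr rfl fun j _ => by ring
  have hcolW : ∀ j, ∑ i, (W i j) ^ 2 = 1 := by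
    intro j
    have h := congrFun (congrFun hWW' j) j
    rw [Matrix.mul_apply] at h
    simp only [Matrix.star_apply, star_trivial, Matrix.one_apply_eq] at h
    rw [← h]
    exact Finset.sum_congr rfl fun i _ => by ring
  -- trace identities
  have trAB : Matrix.trace (A * B) = ∑ i, ∑ j, lam i * mu j * (W i j) ^ 2 := by
    rw [hAs, hBs, hw_trace_formula]
  have trAA : Matrix.trace (A * A) = ∑ i, lam i ^ 2 := by
    rw [hAs, hw_trace_formula, hUU]
    refine Finset.sum_congr rfl fun i _ => ?_
    rw [Finset.sum_eq_single i]
    · rw [Matrix.one_apply_eq]; ring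
    · intro j _ hj; rw [Matrix.one_apply_ne (Ne.symm hj)]; ring
    · simp
  have trBB : Matrix.trace (B * B) = ∑ i, mu i ^ 2 := by
    rw [hBs, hw_trace_formula, hVV]
    refine Finset.sum_congr rfl fun i _ => ?_
    rw [Finset.sum_eq_single i]
    · rw [Matrix.one_apply_eq]; ring
    · intro j _ hj; rw [Matrix.one_apply_ne (Ne.symm hj)]; ring
    · simp
  -- Frobenius norm of A - B via traces
  have hsymm : ∀ i j, (A - B) j i = (A - B) i j := by
    intro i j
    have h := ((hA.sub hB).apply j i).symm
    simpa using h
  have frob : ∑ i, ∑ j, ((A - B) i j) ^ 2 = Matrix.trace ((A - B) * (A - B)) := by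
    rw [Matrix.trace]
    refine Finset.sum_congr rfl fun i _ => ?_
    simp only [Matrix.diag, Matrix.mul_apply]
    refine Finset.sum_congr rfl fun j _ => ?_
    rw [hsymm i j]; ring
  have trexp : Matrix.trace ((A - B) * (A - B))
      = Matrix.trace (A * A) - 2 * Matrix.trace (A * B) + Matrix.trace (B * B) := by
    rw [Matrix.sub_mul, Matrix.mul_sub, Matrix.mul_sub, Matrix.trace_sub, Matrix.trace_sub,
      Matrix.trace_sub, Matrix.trace_mul_comm B A]
    ring
  -- reindexing by the permutations
  have e1 : ∀ (F : Fin n → Fin n → ℝ), ∑ i, ∑ j, F (σ i) (τ j) = ∑ i, ∑ j, F i j := by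
    intro F
    calc ∑ i, ∑ j, F (σ i) (τ j) = ∑ i, ∑ j, F (σ i) j :=
          Finset.sum_congr rfl fun i _ => Equiv.sum_comp τ (F (σ i))
      _ = ∑ i, ∑ j, F i j := Equiv.sum_comp σ (fun i => ∑ j, F i j)
  set S : Fin n → Fin n → ℝ := fun i j => (W (σ i) (τ j)) ^ 2 with hSdef
  have hS0 : ∀ i j, 0 ≤ S i j := fun i j => sq_nonneg _
  have hSrow : ∀ i, ∑ j, S i j = 1 := by
    intro i
    simp only [hSdef]
    rw [Equiv.sum_comp τ (fun j => (W (σ i) j) ^ 2)]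
    exact hrowW (σ i)
  have hScol : ∀ j, ∑ i, S i j = 1 := by
    intro j
    simp only [hSdef]
    rw [Equiv.sum_comp σ (fun i => (W i (τ j)) ^ 2)]
    exact hcolW (τ j)
  have hStr : ∑ i, ∑ j, S i j * lamA i * lamB j = ∑ i, ∑ j, lam i * mu j * (W i j) ^ 2 := by
    rw [hσ, hτ]
    calc ∑ i, ∑ j, S i j * (lam ∘ σ) i * (mu ∘ τ) j
        = ∑ i, ∑ j, (W i j) ^ 2 * lam i * mu j :=
          e1 (fun i j => (W i j) ^ 2 * lam i * mu j)
      _ = ∑ i, ∑ j, lam i * mu j * (W i j) ^ 2 :=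
          Finset.sum_congr rfl fun i _ => Finset.sum_congr rfl fun j _ => by ring
  have hA2 : ∑ i, lamA i ^ 2 = ∑ i, lam i ^ 2 := by
    rw [hσ]; exact Equiv.sum_comp σ (fun i => lam i ^ 2)
  have hB2 : ∑ i, lamB i ^ 2 = ∑ i, mu i ^ 2 := by
    rw [hτ]; exact Equiv.sum_comp τ (fun i => mu i ^ 2)
  have key : ∑ i, ∑ j, S i j * lamA i * lamB j ≤ ∑ i, lamA i * lamB i :=
    hw_ds_rearrange S hS0 hSrow hScol lamA lamB hAdec hBdec
  have lhs_expand : ∑ i, (lamA i - lamB i) ^ 2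
      = ∑ i, lamA i ^ 2 + ∑ i, lamB i ^ 2 - 2 * ∑ i, lamA i * lamB i := by
    rw [← Finset.sum_add_distrib, Finset.mul_sum, ← Finset.sum_sub_distrib]
    exact Finset.sum_congr rfl fun i _ => by ring
  have rhs_eq : ∑ i, ∑ j, ((A - B) i j) ^ 2
      = ∑ i, lamA i ^ 2 + ∑ i, lamB i ^ 2 - 2 * ∑ i, ∑ j, S i j * lamA i * lamB j := by
    rw [frob, trexp, trAA, trBB, trAB, hA2, hB2, hStr]
    ring
  rw [lhs_expand, rhs_eq]
  linarith
end

section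
/- Weyl's perturbation theorem: for real symmetric n×n matrices A and B, the eigenvalues sorted in decreasing order satisfy |λ_k(A) − λ_k(B)| ≤ ‖A − B‖_op for every k ∈ {1,…,n}, where ‖·‖_op is the operator (spectral) norm. -/
open scoped RealInnerProductSpace

private lemma clm_eigen {n : ℕ} (A : Matrix (Fin n) (Fin n) ℝ) (hA : A.IsHermitian) (j : Fin n) :
    Matrix.toEuclideanCLM (𝕜 := ℝ) A (hA.eigenvectorBasis j) =
      hA.eigenvalues j • hA.eigenvectorBasis j := by
  apply (WithLp.equiv 2 _).injective
  rw [WithLp.equiv_apply, Matrix.ofLp_toEuclideanCLM]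
  simpa using hA.mulVec_eigenvectorBasis j

private lemma quad_ge {n : ℕ} {ι : Type} [Fintype ι]
    (T : EuclideanSpace ℝ (Fin n) →L[ℝ] EuclideanSpace ℝ (Fin n))
    {v : ι → EuclideanSpace ℝ (Fin n)} (hv : Orthonormal ℝ v) {μ : ι → ℝ}
    (hev : ∀ i, T (v i) = μ i • v i) {m : ℝ} (hm : ∀ i, m ≤ μ i)
    {x : EuclideanSpace ℝ (Fin n)} (hx : x ∈ Submodule.span ℝ (Set.range v))
    (hx1 : ‖x‖ = 1) : m ≤ ⟪T x, x⟫ := by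
  obtain ⟨c, rfl⟩ := (Submodule.mem_span_range_iff_exists_fun ℝ).1 hx
  have hTx : T (∑ i, c i • v i) = ∑ i, (μ i * c i) • v i := by
    rw [map_sum]
    refine Finset.sum_congr rfl fun i _ => ?_
    rw [T.map_smul, hev i, smul_smul, mul_comm]
  have h1 : ⟪T (∑ i, c i • v i), ∑ i, c i • v i⟫ = ∑ i, (μ i * c i) * c i := by
    rw [hTx]
    simpa using hv.inner_sum (fun i => μ i * c i) c Finset.univ
  have h2 : (∑ i, c i * c i) = 1 := by
    have := hv.inner_sum c c Finset.univ
    simp only [conj_trivial] at this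
    rw [← this, real_inner_self_eq_norm_sq, hx1]; norm_num
  rw [h1]
  calc m = ∑ i, m * (c i * c i) := by rw [← Finset.mul_sum, h2, mul_one]
    _ ≤ ∑ i, (μ i * c i) * c i := by
        refine Finset.sum_le_sum fun i _ => ?_
        rw [mul_assoc]
        exact mul_le_mul_of_nonneg_right (hm i) (mul_self_nonneg _)

private lemma quad_le {n : ℕ} {ι : Type} [Fintype ι]
    (T : EuclideanSpace ℝ (Fin n) →L[ℝ] EuclideanSpace ℝ (Fin n))
    {v : ι → EuclideanSpace ℝ (Fin n)} (hv : Orthonormal ℝ v) {μ : ι → ℝ}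
    (hev : ∀ i, T (v i) = μ i • v i) {m : ℝ} (hm : ∀ i, μ i ≤ m)
    {x : EuclideanSpace ℝ (Fin n)} (hx : x ∈ Submodule.span ℝ (Set.range v))
    (hx1 : ‖x‖ = 1) : ⟪T x, x⟫ ≤ m := by
  have := quad_ge (-T) hv (μ := fun i => -μ i)
    (fun i => by rw [ContinuousLinearMap.neg_apply, hev i, neg_smul])
    (m := -m) (fun i => neg_le_neg (hm i)) hx hx1
  rw [ContinuousLinearMap.neg_apply, inner_neg_left] at this
  linarith

private lemma weyl_one_sided
    (n : ℕ) (A B : Matrix (Fin n) (Fin n) ℝ)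
    (hA : A.IsHermitian) (hB : B.IsHermitian)
    (lamA lamB : Fin n → ℝ)
    (hAdec : Antitone lamA) (hBdec : Antitone lamB)
    (hAeig : ∃ σ : Equiv.Perm (Fin n), lamA = hA.eigenvalues ∘ σ)
    (hBeig : ∃ σ : Equiv.Perm (Fin n), lamB = hB.eigenvalues ∘ σ)
    (k : Fin n) :
    lamA k - lamB k ≤ ‖Matrix.toEuclideanCLM (𝕜 := ℝ) (A - B)‖ := by
  obtain ⟨σ, hσ⟩ := hAeig
  obtain ⟨τ, hτ⟩ := hBeig
  have hk : (k : ℕ) + 1 ≤ n := k.isLt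
  set f : Fin ((k : ℕ) + 1) → EuclideanSpace ℝ (Fin n) :=
    fun i => hA.eigenvectorBasis (σ (Fin.castLE hk i)) with hf_def
  set g : Fin (n - (k : ℕ)) → EuclideanSpace ℝ (Fin n) :=
    fun j => hB.eigenvectorBasis (τ ⟨(k : ℕ) + j, by omega⟩) with hg_def
  have hf : Orthonormal ℝ f :=
    hA.eigenvectorBasis.orthonormal.comp _
      (σ.injective.comp (Fin.castLE_injective hk))
  have hg : Orthonormal ℝ g := by
    refine hB.eigenvectorBasis.orthonormal.comp _ (τ.injective.comp ?_)
    intro a b hab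
    have : (k : ℕ) + a = (k : ℕ) + b := congrArg Fin.val hab
    exact Fin.ext (by omega)
  set S := Submodule.span ℝ (Set.range f) with hS_def
  set T := Submodule.span ℝ (Set.range g) with hT_def
  have hdimS : Module.finrank ℝ S = (k : ℕ) + 1 := by
    rw [hS_def, finrank_span_eq_card hf.linearIndependent, Fintype.card_fin]
  have hdimT : Module.finrank ℝ T = n - (k : ℕ) := by
    rw [hT_def, finrank_span_eq_card hg.linearIndependent, Fintype.card_fin]
  -- nontrivial intersection
  have hne : S ⊓ T ≠ ⊥ := by
    intro hbot
    have hsum := Submodule.finrank_sup_add_finrank_inf_eq S T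
    rw [hbot, hdimS, hdimT] at hsum
    have hle : Module.finrank ℝ ↥(S ⊔ T) ≤ n := by
      simpa [finrank_euclideanSpace] using (S ⊔ T).finrank_le
    simp only [finrank_bot, add_zero] at hsum
    omega
  obtain ⟨x, hx, hx0⟩ := Submodule.ne_bot_iff _ |>.1 hne
  set y : EuclideanSpace ℝ (Fin n) := ‖x‖⁻¹ • x with hy_def
  have hy1 : ‖y‖ = 1 := norm_smul_inv_norm hx0
  have hyS : y ∈ S := S.smul_mem _ hx.1
  have hyT : y ∈ T := T.smul_mem _ hx.2
  -- quadratic form bounds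
  have hbA : lamA k ≤ ⟪Matrix.toEuclideanCLM (𝕜 := ℝ) A y, y⟫ := by
    refine quad_ge _ hf (μ := fun i => lamA (Fin.castLE hk i)) ?_ ?_ hyS hy1
    · intro i
      rw [hσ]
      exact clm_eigen A hA _
    · intro i
      refine hAdec ?_
      rw [Fin.le_def]
      simp only [Fin.coe_castLE]
      omega
  have hbB : ⟪Matrix.toEuclideanCLM (𝕜 := ℝ) B y, y⟫ ≤ lamB k := by
    refine quad_le _ hg (μ := fun j => lamB ⟨(k : ℕ) + j, by omega⟩) ?_ ?_ hyT hy1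
    · intro j
      rw [hτ]
      exact clm_eigen B hB _
    · intro j
      refine hBdec ?_
      rw [Fin.le_def]
      simp
  -- operator norm bound
  have hsub : Matrix.toEuclideanCLM (𝕜 := ℝ) (A - B) =
      Matrix.toEuclideanCLM (𝕜 := ℝ) A - Matrix.toEuclideanCLM (𝕜 := ℝ) B := map_sub _ _ _
  have hfin : ⟪Matrix.toEuclideanCLM (𝕜 := ℝ) (A - B) y, y⟫ ≤
      ‖Matrix.toEuclideanCLM (𝕜 := ℝ) (A - B)‖ := by
    calc ⟪Matrix.toEuclideanCLM (𝕜 := ℝ) (A - B) y, y⟫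
        ≤ ‖Matrix.toEuclideanCLM (𝕜 := ℝ) (A - B) y‖ * ‖y‖ := real_inner_le_norm _ _
      _ ≤ ‖Matrix.toEuclideanCLM (𝕜 := ℝ) (A - B)‖ * ‖y‖ * ‖y‖ :=
          mul_le_mul_of_nonneg_right ((Matrix.toEuclideanCLM (𝕜 := ℝ) (A - B)).le_opNorm y)
            (norm_nonneg _)
      _ = ‖Matrix.toEuclideanCLM (𝕜 := ℝ) (A - B)‖ := by rw [hy1]; ring
  have hdiff : ⟪Matrix.toEuclideanCLM (𝕜 := ℝ) (A - B) y, y⟫ =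
      ⟪Matrix.toEuclideanCLM (𝕜 := ℝ) A y, y⟫ - ⟪Matrix.toEuclideanCLM (𝕜 := ℝ) B y, y⟫ := by
    rw [hsub, ContinuousLinearMap.sub_apply, inner_sub_left]
  linarith

/-- Weyl's perturbation theorem: for real symmetric `n×n` matrices `A` and `B`
with eigenvalues listed in decreasing order (with multiplicity) as `lamA` and
`lamB`, `|λ_k(A) − λ_k(B)| ≤ ‖A − B‖_op` for every `k`, where `‖·‖_op` is the
operator (spectral) norm. -/
theorem weyl_perturbation
    (n : ℕ) (A B : Matrix (Fin n) (Fin n) ℝ)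
    (hA : A.IsHermitian) (hB : B.IsHermitian)
    (lamA lamB : Fin n → ℝ)
    (hAdec : Antitone lamA) (hBdec : Antitone lamB)
    (hAeig : ∃ σ : Equiv.Perm (Fin n), lamA = hA.eigenvalues ∘ σ)
    (hBeig : ∃ σ : Equiv.Perm (Fin n), lamB = hB.eigenvalues ∘ σ) :
    ∀ k : Fin n, |lamA k - lamB k| ≤ ‖Matrix.toEuclideanCLM (𝕜 := ℝ) (A - B)‖ := by
  intro k
  rw [abs_sub_le_iff]
  constructor
  · exact weyl_one_sided n A B hA hB lamA lamB hAdec hBdec hAeig hBeig k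
  · have h := weyl_one_sided n B A hB hA lamB lamA hBdec hAdec hBeig hAeig k
    have : ‖Matrix.toEuclideanCLM (𝕜 := ℝ) (B - A)‖ =
        ‖Matrix.toEuclideanCLM (𝕜 := ℝ) (A - B)‖ := by
      rw [(neg_sub A B).symm, map_neg, norm_neg]
    linarith
end

section
/- The ℓ₂ rearrangement distance δ₂ defined on square-summable real sequences by δ₂(x,y) = inf over finitely supported permutations σ of (Σ_i (x_i − y_{σ(i)})²)^{1/2} satisfies the triangle inequality: δ₂(x,z) ≤ δ₂(x,y) + δ₂(y,z) for all square-summable sequences x, y, z. -/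
/-- The ℓ₂ rearrangement distance: `δ₂(x,y)² = inf_σ Σ_i (x_i − y_{σ(i)})²`, the
infimum running over the finitely supported permutations `σ` of `ℕ`. -/
noncomputable def delta2 (x y : ℕ → ℝ) : ℝ :=
  Real.sqrt (⨅ σ : {σ : Equiv.Perm ℕ // {i | σ i ≠ i}.Finite},
    ∑' i, (x i - y (σ.1 i)) ^ 2)

lemma sq_summable_sub {a b : ℕ → ℝ} (ha : Summable fun i => a i ^ 2)
    (hb : Summable fun i => b i ^ 2) : Summable fun i => (a i - b i) ^ 2 := by
  refine ((ha.add hb).mul_left 2).of_nonneg_of_le (fun i => sq_nonneg _) (fun i => ?_)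
  nlinarith [sq_nonneg (a i + b i)]

lemma memℓp_two_of_sq_summable {a : ℕ → ℝ} (ha : Summable fun i => a i ^ 2) :
    Memℓp a 2 := by
  apply memℓp_gen
  have : (fun i => ‖a i‖ ^ (2 : ENNReal).toReal) = fun i => a i ^ 2 := by
    funext i
    rw [show ((2 : ENNReal).toReal) = ((2 : ℕ) : ℝ) by norm_num, Real.rpow_natCast]
    simp [sq_abs]
  rw [this]; exact ha

lemma norm_lp_two (f : lp (fun _ : ℕ => ℝ) 2) :
    ‖f‖ = Real.sqrt (∑' i, (f : ∀ _ : ℕ, ℝ) i ^ 2) := by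
  have h := lp.norm_rpow_eq_tsum (p := 2) (by norm_num) f
  have h2 : (∑' i, ‖(f : ∀ _ : ℕ, ℝ) i‖ ^ (2 : ENNReal).toReal)
      = ∑' i, (f : ∀ _ : ℕ, ℝ) i ^ 2 := by
    congr 1; funext i
    rw [show ((2 : ENNReal).toReal) = ((2 : ℕ) : ℝ) by norm_num, Real.rpow_natCast]
    simp [sq_abs]
  have h3 : ‖f‖ ^ (2 : ENNReal).toReal = ‖f‖ ^ (2 : ℕ) := by
    rw [show ((2 : ENNReal).toReal) = ((2 : ℕ) : ℝ) by norm_num, Real.rpow_natCast]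
  rw [h3, h2] at h
  rw [← h, Real.sqrt_sq (norm_nonneg f)]

lemma minkowski_tsum {a b : ℕ → ℝ} (ha : Summable fun i => a i ^ 2)
    (hb : Summable fun i => b i ^ 2) :
    Real.sqrt (∑' i, (a i + b i) ^ 2) ≤
      Real.sqrt (∑' i, a i ^ 2) + Real.sqrt (∑' i, b i ^ 2) := by
  let f : lp (fun _ : ℕ => ℝ) 2 := ⟨a, memℓp_two_of_sq_summable ha⟩
  let g : lp (fun _ : ℕ => ℝ) 2 := ⟨b, memℓp_two_of_sq_summable hb⟩
  have h := norm_add_le f g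
  have hfg : ((f + g : lp (fun _ : ℕ => ℝ) 2) : ∀ _ : ℕ, ℝ) = fun i => a i + b i := rfl
  rw [norm_lp_two f, norm_lp_two g, norm_lp_two (f + g), hfg] at h
  exact h

/-- The ℓ₂ rearrangement distance `δ₂` satisfies the triangle inequality on
square-summable real sequences: `δ₂(x,z) ≤ δ₂(x,y) + δ₂(y,z)`. -/
theorem delta2_triangle
    (x y z : ℕ → ℝ)
    (hx : Summable fun i => (x i) ^ 2)
    (hy : Summable fun i => (y i) ^ 2)
    (hz : Summable fun i => (z i) ^ 2) :
    delta2 x z ≤ delta2 x y + delta2 y z := by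
  haveI : Nonempty {σ : Equiv.Perm ℕ // {i | σ i ≠ i}.Finite} :=
    ⟨⟨Equiv.refl ℕ, by simp⟩⟩
  have bdd : ∀ u v : ℕ → ℝ, BddBelow (Set.range fun σ :
      {σ : Equiv.Perm ℕ // {i | σ i ≠ i}.Finite} => ∑' i, (u i - v (σ.1 i)) ^ 2) := by
    intro u v
    refine ⟨0, ?_⟩
    rintro _ ⟨σ, rfl⟩
    exact tsum_nonneg fun i => sq_nonneg _
  have key : ∀ σ τ : {σ : Equiv.Perm ℕ // {i | σ i ≠ i}.Finite},
      delta2 x z ≤ Real.sqrt (∑' i, (x i - y (σ.1 i)) ^ 2)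
        + Real.sqrt (∑' i, (y i - z (τ.1 i)) ^ 2) := by
    intro σ τ
    have hsupp : {i | (σ.1.trans τ.1) i ≠ i}.Finite := by
      apply (σ.2.union τ.2).subset
      intro i hi
      simp only [Set.mem_setOf_eq, Equiv.trans_apply] at hi
      by_contra h
      simp only [Set.mem_union, Set.mem_setOf_eq, not_or, not_not] at h
      exact hi (by rw [h.1, h.2])
    set ρ : {σ : Equiv.Perm ℕ // {i | σ i ≠ i}.Finite} := ⟨σ.1.trans τ.1, hsupp⟩
    have h1 : delta2 x z ≤ Real.sqrt (∑' i, (x i - z (ρ.1 i)) ^ 2) :=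
      Real.sqrt_le_sqrt (ciInf_le (bdd x z) ρ)
    have hyσ : Summable fun i => y (σ.1 i) ^ 2 :=
      (Equiv.summable_iff σ.1 (f := fun j => y j ^ 2)).mpr hy
    have hzρ : Summable fun i => z (ρ.1 i) ^ 2 :=
      (Equiv.summable_iff ρ.1 (f := fun j => z j ^ 2)).mpr hz
    have h2 := minkowski_tsum (sq_summable_sub hx hyσ) (sq_summable_sub hyσ hzρ)
    have e1 : ∑' i, ((x i - y (σ.1 i)) + (y (σ.1 i) - z (ρ.1 i))) ^ 2
        = ∑' i, (x i - z (ρ.1 i)) ^ 2 := by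
      congr 1; funext i; ring
    have e2 : ∑' i, (y (σ.1 i) - z (ρ.1 i)) ^ 2 = ∑' i, (y i - z (τ.1 i)) ^ 2 := by
      have := Equiv.tsum_eq σ.1 (fun j => (y j - z (τ.1 j)) ^ 2)
      exact this
    rw [e1, e2] at h2
    exact h1.trans h2
  have exy : delta2 x y = ⨅ σ : {σ : Equiv.Perm ℕ // {i | σ i ≠ i}.Finite},
      Real.sqrt (∑' i, (x i - y (σ.1 i)) ^ 2) :=
    Monotone.map_ciInf_of_continuousAt Real.continuous_sqrt.continuousAt
      (fun _ _ h => Real.sqrt_le_sqrt h) (bdd x y)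
  have eyz : delta2 y z = ⨅ τ : {σ : Equiv.Perm ℕ // {i | σ i ≠ i}.Finite},
      Real.sqrt (∑' i, (y i - z (τ.1 i)) ^ 2) :=
    Monotone.map_ciInf_of_continuousAt Real.continuous_sqrt.continuousAt
      (fun _ _ h => Real.sqrt_le_sqrt h) (bdd y z)
  rw [exy, eyz]
  exact le_ciInf_add_ciInf key
end
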